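/- The category Rec has weak exponentials: for all objects A, B ⊆ ℕ, the subset B^A := {e ∈ ℕ : for all a ∈ A, {e}(a) is defined and {e}(a) ∈ B}, together with the evaluation morphism ev : B^A × A → B given by ev(⟨e,a⟩) = {e}(a), satisfies: for every object C of Rec and every morphism f : C × A → B of Rec there exists a (not necessarily unique) morphism f' : C → B^A of Rec such that ev(⟨f'(c), a⟩) = f(⟨c,a⟩) for all c ∈ C and a ∈ A. -/

import Mathlib

open CategoryTheory

namespace RecPaper

/-- Kleene application `{e}(n)`: apply the partial recursive function with Gödel code `e`
to the input `n`. -/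
def kap (e n : ℕ) : Part ℕ :=
  Nat.Partrec.Code.eval (Denumerable.ofNat Nat.Partrec.Code e) n

/-- The type of objects of the category `Rec`: subsets of `ℕ`. -/
def RecCat : Type := Set ℕ

/-- The underlying subset of `ℕ` of an object of `Rec`. -/
def RecCat.carrier (A : RecCat) : Set ℕ := A

/-- View a subset of `ℕ` as an object of `Rec`. -/
def RecCat.ofSet (A : Set ℕ) : RecCat := A

instance : CoeSort RecCat Type := ⟨fun A => {n : ℕ // n ∈ A.carrier}⟩

/-- A function between subsets of `ℕ` is *tracked* if there is a partial recursive
function, defined on the whole domain, whose restriction to the domain is the given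
function. -/
def Tracked {A B : RecCat} (f : A → B) : Prop :=
  ∃ g : ℕ →. ℕ, Nat.Partrec g ∧ ∀ a : A, g a.val = Part.some (f a).val

/-- The category `Rec` of subsets of `ℕ` and restrictions of partial recursive functions. -/
instance : Category RecCat where
  Hom A B := {f : A → B // Tracked f}
  id A := ⟨fun a => a, (fun n => n : ℕ → ℕ), Nat.Partrec.of_primrec Nat.Primrec.id,
    fun _ => rfl⟩
  comp {A B C} f g := ⟨fun a => g.1 (f.1 a), by
    obtain ⟨u, pu, hu⟩ := f.2
    obtain ⟨v, pv, hv⟩ := g.2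
    refine ⟨fun n => u n >>= v, pv.comp pu, fun a => ?_⟩
    show (u a.val).bind v = _
    rw [hu a]
    exact (Part.bind_some _ _).trans (hv (f.1 a))⟩
  id_comp _ := rfl
  comp_id _ := rfl
  assoc _ _ _ := rfl

/-- The underlying function of a morphism of `Rec`. -/
def hfun {A B : RecCat} (f : A ⟶ B) : A → B := f.1

/-- The value of a morphism of `Rec` on an element, as a natural number. -/
def happ {A B : RecCat} (f : A ⟶ B) (a : A) : ℕ := (hfun f a).val


/-- The product set `{⟨a,b⟩ : a ∈ A, b ∈ B}`. -/
def prodSet (A B : Set ℕ) : Set ℕ := {n | ∃ a ∈ A, ∃ b ∈ B, n = Nat.pair a b}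

/-- The weak exponential set `B^A`: the set of Gödel codes `e` such that `{e}(a)` is
defined and in `B` for every `a ∈ A`. -/
def expSet (A B : Set ℕ) : Set ℕ := {e | ∀ a ∈ A, ∃ v ∈ B, kap e a = Part.some v}

open Nat.Partrec

lemma kap_encode (c : Code) (n : ℕ) : kap (Encodable.encode c) n = c.eval n := by
  rw [kap, Denumerable.ofNat_encode]

lemma partrec_kap_unpair : Nat.Partrec fun n => kap n.unpair.1 n.unpair.2 :=
  Partrec.nat_iff.mp <| Code.eval_part.comp
    ((Computable.ofNat _).comp (Computable.fst.comp Computable.unpair))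
    (Computable.snd.comp Computable.unpair)

lemma Tracked.exists_code {A B : RecCat} {f : A → B} (hf : Tracked f) :
    ∃ c : Code, ∀ a : A, c.eval a.val = Part.some (f a).val := by
  obtain ⟨g, hg, hgf⟩ := hf
  obtain ⟨c, rfl⟩ := Code.exists_code.mp hg
  exact ⟨c, hgf⟩

lemma exists_kap_unpair_of_mem {A B : Set ℕ} {x : ℕ} (hx : x ∈ prodSet (expSet A B) A) :
    ∃ v ∈ B, kap x.unpair.1 x.unpair.2 = Part.some v := by
  obtain ⟨e, he, a, ha, rfl⟩ := hx
  simpa using he a ha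

noncomputable def ev (A B : RecCat) :
    RecCat.ofSet (prodSet (expSet A.carrier B.carrier) A.carrier) ⟶ B :=
  ⟨fun x => ⟨_, (exists_kap_unpair_of_mem x.2).choose_spec.1⟩,
    _, partrec_kap_unpair, fun x => (exists_kap_unpair_of_mem x.2).choose_spec.2⟩

lemma kap_unpair_ev (A B : RecCat)
    (x : RecCat.ofSet (prodSet (expSet A.carrier B.carrier) A.carrier)) :
    kap x.val.unpair.1 x.val.unpair.2 = Part.some (happ (ev A B) x) :=
  (exists_kap_unpair_of_mem x.2).choose_spec.2

/-- `f'(c)` is the code of `a ↦ f(⟨c,a⟩)` obtained by currying a code of a tracker of `f`;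
that `c ↦ f'(c)` is computable is the s-m-n theorem. -/
lemma exists_transpose {A B C : RecCat} (f : RecCat.ofSet (prodSet C.carrier A.carrier) ⟶ B) :
    ∃ f' : C ⟶ RecCat.ofSet (expSet A.carrier B.carrier),
      ∀ (c : C) (z : RecCat.ofSet (prodSet C.carrier A.carrier)), z.val.unpair.1 = c.val →
        kap (happ f' c) z.val.unpair.2 = Part.some (happ f z) := by
  obtain ⟨cf, hcf⟩ := f.2.exists_code
  have kap_curry (n a : ℕ) : kap (Encodable.encode (cf.curry n)) a = cf.eval (Nat.pair n a) := by
    rw [kap_encode, Code.eval_curry]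
  have mem_expSet (c : C) : Encodable.encode (cf.curry c.val) ∈ expSet A.carrier B.carrier := by
    intro a ha
    let z : RecCat.ofSet (prodSet C.carrier A.carrier) := ⟨_, c.val, c.2, a, ha, rfl⟩
    exact ⟨happ f z, (hfun f z).2, (kap_curry _ _).trans (hcf z)⟩
  have computable_curry : Computable fun n => Encodable.encode (cf.curry n) :=
    Computable.encode.comp
      ((Primrec₂.to_comp Code.primrec₂_curry).comp (Computable.const cf) Computable.id)
  refine ⟨⟨fun c => ⟨_, mem_expSet c⟩, _, Partrec.nat_iff.mp computable_curry.partrec,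
    fun _ => rfl⟩, fun c z hzc => ?_⟩
  change kap (Encodable.encode (cf.curry c.val)) _ = _
  rw [kap_curry, ← hzc, Nat.pair_unpair]
  exact hcf z

/-- The category `Rec` has weak exponentials: `B^A` together with the evaluation morphism
`ev(⟨e,a⟩) = {e}(a)` weakly classifies morphisms `C × A → B`. -/
theorem rec_weak_exponentials :
    ∀ A B : RecCat,
      ∃ ev : RecCat.ofSet (prodSet (expSet A.carrier B.carrier) A.carrier) ⟶ B,
        (∀ x, kap (Nat.unpair x.val).1 (Nat.unpair x.val).2 = Part.some (happ ev x)) ∧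
        ∀ (C : RecCat) (f : RecCat.ofSet (prodSet C.carrier A.carrier) ⟶ B),
          ∃ f' : C ⟶ RecCat.ofSet (expSet A.carrier B.carrier),
            ∀ (z : RecCat.ofSet (prodSet C.carrier A.carrier)) (c : C)
              (w : RecCat.ofSet (prodSet (expSet A.carrier B.carrier) A.carrier)),
              (Nat.unpair z.val).1 = c.val →
              w.val = Nat.pair (happ f' c) (Nat.unpair z.val).2 →
              happ ev w = happ f z := by
  intro A B
  refine ⟨ev A B, kap_unpair_ev A B, fun C f => ?_⟩
  obtain ⟨f', hf'⟩ := exists_transpose f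
  refine ⟨f', fun z c w hzc hw => Part.some_injective ?_⟩
  rw [← kap_unpair_ev, ← hf' c z hzc, hw, Nat.unpair_pair]

end RecPaper
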